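/- Under the VWAP pricing structure, Assumption 2, and Assumptions 1(3)-1(4) on the haircut function g, the set of clearing price vectors (clearing haircut and clearing prices) is nonempty and possesses a greatest and a least element: there exist clearing price vectors (q↑, q̄_1↑,...,q̄_n↑) and (q↓, q̄_1↓,...,q̄_n↓) such that every clearing price vector (q, q̄_1,...,q̄_n) satisfies q↓ ≤ q ≤ q↑ and q̄_i↓ ≤ q̄_i ≤ q̄_i↑ for all i. -/

import Mathlib

noncomputable section

/-- The domain `D = ∏ [0, aᵢ]` of admissible liquidation vectors. -/
def memD (n : ℕ) (a s : Fin n → ℝ) : Prop := ∀ i, s i ∈ Set.Icc 0 (a i)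

/-- Bank `i`'s cost: realized loss from sales plus interest on the borrowed amount. -/
def obj (n : ℕ) (r : ℝ) (h : Fin n → ℝ) (fbar : Fin n → (Fin n → ℝ) → ℝ)
    (i : Fin n) (s : Fin n → ℝ) : ℝ :=
  s i * (1 - fbar i s) + r * (h i - s i * fbar i s)

/-- Feasibility in problem (P2) with fixed prices `(q, q̄)`. -/
def feasP2 (n : ℕ) (a h : Fin n → ℝ) (q : ℝ) (qb : Fin n → ℝ) (i : Fin n) (x : ℝ) : Prop :=
  x ∈ Set.Icc 0 (a i) ∧ x ≤ h i / qb i ∧ (h i - a i * q) / (qb i - q) ≤ x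

/-- `s` is a Nash equilibrium of problem (P2) at fixed prices `(q, q̄)`. -/
def NashP2 (n : ℕ) (a h : Fin n → ℝ) (r q : ℝ) (qb : Fin n → ℝ)
    (fbar : Fin n → (Fin n → ℝ) → ℝ) (s : Fin n → ℝ) : Prop :=
  ∀ i : Fin n,
    (h i ≤ a i * qb i →
      feasP2 n a h q qb i (s i) ∧
      ∀ x : ℝ, feasP2 n a h q qb i x →
        obj n r h fbar i s ≤ obj n r h fbar i (Function.update s i x)) ∧
    (a i * qb i < h i → s i = a i)

/-- Volume weighted average price. -/
def vwap (n : ℕ) (f : ℝ → ℝ) : Fin n → (Fin n → ℝ) → ℝ := fun _ s =>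
  if (∑ j, s j) = 0 then 1 else (∫ σ in (0:ℝ)..(∑ j, s j), f σ) / (∑ j, s j)

/-- Assumption 2 on the order book density `f : [0,M] → (0,1]`. -/
structure Assumption2 (M : ℝ) (f : ℝ → ℝ) : Prop where
  mem : ∀ x ∈ Set.Icc (0 : ℝ) M, f x ∈ Set.Ioc (0 : ℝ) 1
  anti : StrictAntiOn f (Set.Icc 0 M)
  smooth : ContDiffOn ℝ 2 f (Set.Icc 0 M)
  f_zero : f 0 = 1
  deriv_mono : MonotoneOn (derivWithin f (Set.Icc 0 M)) (Set.Icc 0 M)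

/-- `(q, q̄)` is a clearing price vector under VWAP pricing: some Nash equilibrium `s` of
(P2) at these prices reproduces them, `q = g(∑ sᵢ)` and `q̄ᵢ = f̄ᵢ(s)`. -/
def ClearingVWAP (n : ℕ) (a h : Fin n → ℝ) (r : ℝ) (f g : ℝ → ℝ)
    (q : ℝ) (qb : Fin n → ℝ) : Prop :=
  ∃ s : Fin n → ℝ, memD n a s ∧ NashP2 n a h r q qb (vwap n f) s ∧
    q = g (∑ i, s i) ∧ ∀ i, qb i = vwap n f i s

/-!
Every clearing price vector is determined by the total sale `T = ∑ sᵢ` of an equilibrium `s`: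
`q = g(T)` and `q̄ᵢ = f̄(T)`, both antitone in `T`. It therefore suffices that the set of clearing
equilibria is nonempty and compact: its equilibria of least and greatest total sale give the
greatest and least prices.

Compactness is a Berge-type argument: at the clearing prices, bank `i`'s feasible sales form an
interval whose endpoints depend continuously on `s`, and its cost is jointly continuous.

For existence, bank `i`'s cost is convex in its own sale `x`, and at a total sale `T > 0` its
derivative depends only on `T` and `x`. Hence the best reply to a total `T` is the projection of
the sale where this derivative vanishes onto the feasible interval; it is continuous in `T`, and
a fixed point of `T ↦ ∑ᵢ responseᵢ(T)` is an equilibrium, found by the intermediate value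
theorem. If there is none, the aggregate response stays below `T` as `T → 0⁺`, which forces
`r = 0` and `hᵢ ≤ aᵢ g(0)`; then selling nothing is an equilibrium.
-/

open Set Filter Topology

section Clamp

variable {α : Type*} [LinearOrder α] {l m u : α}

theorem le_max_min_of_max_min_lt (h : max l (min m u) < u) : m ≤ max l (min m u) := by
  have hmu : m < u := (min_lt_iff.1 ((le_max_right _ _).trans_lt h)).resolve_right (lt_irrefl u)
  calc m = min m u := (min_eq_left hmu.le).symm
    _ ≤ max l (min m u) := le_max_right _ _

theorem max_min_le_of_lt_max_min (h : l < max l (min m u)) : max l (min m u) ≤ m := by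
  rcases le_total l (min m u) with hl | hl
  · exact (max_eq_right hl).trans_le (min_le_left _ _)
  · exact absurd (max_eq_left hl) h.ne'

end Clamp

theorem isClosed_setOf_isMinOn_Icc {X : Type*} [TopologicalSpace X] {K : Set X}
    (hK : IsClosed K) {L U π : X → ℝ} {φ : X → ℝ → ℝ} {α β : ℝ}
    (hL : ContinuousOn L K) (hU : ContinuousOn U K) (hπ : ContinuousOn π K)
    (hφ : ContinuousOn (fun z : X × ℝ => φ z.1 z.2) (K ×ˢ Icc α β))
    (hαL : ∀ p ∈ K, α ≤ L p) (hUβ : ∀ p ∈ K, U p ≤ β) :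
    IsClosed {p | p ∈ K ∧ π p ∈ Icc (L p) (U p) ∧ IsMinOn (φ p) (Icc (L p) (U p)) (π p)} := by
  set S := {p | p ∈ K ∧ π p ∈ Icc (L p) (U p) ∧ IsMinOn (φ p) (Icc (L p) (U p)) (π p)}
  refine isClosed_of_closure_subset fun p hp => ?_
  have hSK : S ⊆ K := fun q hq => hq.1
  have hpK : p ∈ K := closure_minimal hSK hK hp
  have : (𝓝[S] p).NeBot := mem_closure_iff_nhdsWithin_neBot.1 hp
  have hlim : ∀ F : X → ℝ, ContinuousOn F K → Tendsto F (𝓝[S] p) (𝓝 (F p)) :=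
    fun F hF => (hF p hpK).mono hSK
  have hφlim : ∀ ξ : X → ℝ, ∀ y ∈ Icc α β, Tendsto ξ (𝓝[S] p) (𝓝 y) →
      (∀ q ∈ S, ξ q ∈ Icc (L q) (U q)) → Tendsto (fun q => φ q (ξ q)) (𝓝[S] p) (𝓝 (φ p y)) := by
    intro ξ y hy hξ hξS
    have hpair : Tendsto (fun q => (q, ξ q)) (𝓝[S] p) (𝓝[K ×ˢ Icc α β] (p, y)) := by
      refine tendsto_nhdsWithin_iff.2 ⟨?_, ?_⟩
      · exact (tendsto_id.mono_left nhdsWithin_le_nhds).prodMk_nhds hξ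
      · filter_upwards [self_mem_nhdsWithin] with q hq
        exact ⟨hq.1, (hαL q hq.1).trans (hξS q hq).1, (hξS q hq).2.trans (hUβ q hq.1)⟩
    exact (hφ (p, y) ⟨hpK, hy⟩).tendsto.comp hpair
  have hfeas : π p ∈ Icc (L p) (U p) :=
    ⟨le_of_tendsto_of_tendsto (hlim L hL) (hlim π hπ) (eventually_mem_nhdsWithin.mono
        fun q hq => hq.2.1.1),
      le_of_tendsto_of_tendsto (hlim π hπ) (hlim U hU) (eventually_mem_nhdsWithin.mono
        fun q hq => hq.2.1.2)⟩
  have hpβ : Icc (L p) (U p) ⊆ Icc α β := Icc_subset_Icc (hαL p hpK) (hUβ p hpK)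
  refine ⟨hpK, hfeas, isMinOn_iff.2 fun x hx => ?_⟩
  -- compare with the point of the nearby feasible interval closest to `x`
  have hxq : Tendsto (fun q => max (L q) (min x (U q))) (𝓝[S] p) (𝓝 x) := by
    simpa [min_eq_left hx.2, max_eq_right hx.1] using
      (hlim L hL).max ((tendsto_const_nhds (x := x)).min (hlim U hU))
  have hxqS : ∀ q ∈ S, max (L q) (min x (U q)) ∈ Icc (L q) (U q) := fun q hq =>
    ⟨le_max_left _ _, max_le (hq.2.1.1.trans hq.2.1.2) (min_le_right _ _)⟩
  exact le_of_tendsto_of_tendsto (hφlim π _ (hpβ hfeas) (hlim π hπ) fun q hq => hq.2.1)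
    (hφlim _ x (hpβ hx) hxq hxqS)
    (eventually_mem_nhdsWithin.mono fun q hq => isMinOn_iff.1 hq.2.2 _ (hxqS q hq))

theorem exists_eventually_sub_le_mul {f : ℝ → ℝ} {s : Set ℝ} {x : ℝ} (hs : s ∈ 𝓝[>] x)
    (hf : DifferentiableWithinAt ℝ f s x) :
    ∃ K > 0, ∀ᶠ y in 𝓝[>] x, f x - f y ≤ K * (y - x) := by
  set d := derivWithin f s x
  have hslope : Tendsto (slope f x) (𝓝[>] x) (𝓝 d) :=
    (hasDerivWithinAt_iff_tendsto_slope' self_notMem_Ioi).1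
      (hf.hasDerivWithinAt.mono_of_mem_nhdsWithin hs)
  refine ⟨|d| + 1, by positivity, ?_⟩
  filter_upwards [hslope.eventually (eventually_gt_nhds (sub_one_lt d)), self_mem_nhdsWithin]
    with y hy (hxy : x < y)
  rw [slope_def_field, lt_div_iff₀ (sub_pos.2 hxy)] at hy
  nlinarith [neg_abs_le d]

section AveragePrice

variable {f : ℝ → ℝ} {M t : ℝ}

theorem intervalIntegrable_of_antitoneOn {t₁ t₂ : ℝ} (hf : AntitoneOn f (Icc t₁ t₂))
    (h : t₁ ≤ t₂) : IntervalIntegrable f MeasureTheory.volume t₁ t₂ :=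
  (uIcc_of_le h ▸ hf).intervalIntegrable

theorem integral_le_sub_mul_of_antitoneOn {t₁ t₂ : ℝ} (hf : AntitoneOn f (Icc t₁ t₂))
    (h : t₁ ≤ t₂) : ∫ σ in t₁..t₂, f σ ≤ (t₂ - t₁) * f t₁ := by
  simpa using intervalIntegral.integral_mono_on h (intervalIntegrable_of_antitoneOn hf h)
    intervalIntegrable_const
    fun x hx => hf ⟨le_rfl, h⟩ hx hx.1

theorem sub_mul_le_integral_of_antitoneOn {t₁ t₂ : ℝ} (hf : AntitoneOn f (Icc t₁ t₂))
    (h : t₁ ≤ t₂) : (t₂ - t₁) * f t₂ ≤ ∫ σ in t₁..t₂, f σ := by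
  simpa using intervalIntegral.integral_mono_on h intervalIntegrable_const
    (intervalIntegrable_of_antitoneOn hf h)
    fun x hx => hf hx ⟨h, le_rfl⟩ hx.2

theorem integral_add_integral_of_antitoneOn {t₁ t₂ : ℝ} (hf : AntitoneOn f (Icc 0 t₂))
    (h₁ : 0 ≤ t₁) (h₁₂ : t₁ ≤ t₂) :
    (∫ σ in (0:ℝ)..t₁, f σ) + ∫ σ in t₁..t₂, f σ = ∫ σ in (0:ℝ)..t₂, f σ :=
  intervalIntegral.integral_add_adjacent_intervals
    (intervalIntegrable_of_antitoneOn (hf.mono (Icc_subset_Icc le_rfl h₁₂)) h₁)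
    (intervalIntegrable_of_antitoneOn (hf.mono (Icc_subset_Icc h₁ le_rfl)) h₁₂)

def avgPrice (f : ℝ → ℝ) (t : ℝ) : ℝ :=
  if t = 0 then 1 else (∫ σ in (0:ℝ)..t, f σ) / t

theorem vwap_eq_avgPrice {n : ℕ} (i : Fin n) (s : Fin n → ℝ) :
    vwap n f i s = avgPrice f (∑ j, s j) := rfl

@[simp] theorem avgPrice_zero : avgPrice f 0 = 1 := if_pos rfl

theorem avgPrice_of_ne_zero (ht : t ≠ 0) : avgPrice f t = (∫ σ in (0:ℝ)..t, f σ) / t :=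
  if_neg ht

theorem le_avgPrice (hf : AntitoneOn f (Icc 0 t)) (ht : 0 < t) : f t ≤ avgPrice f t := by
  rw [avgPrice_of_ne_zero ht.ne', le_div_iff₀ ht]
  simpa [mul_comm] using sub_mul_le_integral_of_antitoneOn hf ht.le

theorem avgPrice_le (hf : AntitoneOn f (Icc 0 t)) (ht : 0 < t) : avgPrice f t ≤ f 0 := by
  rw [avgPrice_of_ne_zero ht.ne', div_le_iff₀ ht]
  simpa [mul_comm] using integral_le_sub_mul_of_antitoneOn hf ht.le

theorem lt_avgPrice (hf : StrictAntiOn f (Icc 0 t)) (ht : 0 < t) : f t < avgPrice f t := by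
  have hmid : t / 2 ∈ Icc 0 t := ⟨by linarith, by linarith⟩
  have hfirst := sub_mul_le_integral_of_antitoneOn
    (hf.antitoneOn.mono (Icc_subset_Icc le_rfl hmid.2)) hmid.1
  have hsecond := sub_mul_le_integral_of_antitoneOn
    (hf.antitoneOn.mono (Icc_subset_Icc hmid.1 le_rfl)) hmid.2
  have hlt : f t < f (t / 2) := hf hmid ⟨ht.le, le_rfl⟩ (by linarith)
  rw [avgPrice_of_ne_zero ht.ne', lt_div_iff₀ ht,
    ← integral_add_integral_of_antitoneOn hf.antitoneOn hmid.1 hmid.2]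
  nlinarith

theorem avgPrice_antitoneOn_Ioc (hf : AntitoneOn f (Icc 0 M)) :
    AntitoneOn (avgPrice f) (Ioc 0 M) := by
  intro t₁ ht₁ t₂ ht₂ h12
  have hanti : AntitoneOn f (Icc 0 t₂) := hf.mono (Icc_subset_Icc le_rfl ht₂.2)
  have htail := integral_le_sub_mul_of_antitoneOn (hanti.mono (Icc_subset_Icc ht₁.1.le le_rfl)) h12
  have hhead := le_avgPrice (hanti.mono (Icc_subset_Icc le_rfl h12)) ht₁.1
  rw [avgPrice_of_ne_zero ht₁.1.ne', le_div_iff₀ ht₁.1] at hhead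
  rw [avgPrice_of_ne_zero ht₁.1.ne', avgPrice_of_ne_zero ht₂.1.ne', div_le_div_iff₀ ht₂.1 ht₁.1,
    ← integral_add_integral_of_antitoneOn hanti ht₁.1.le h12]
  nlinarith [mul_le_mul_of_nonneg_left htail ht₁.1.le,
    mul_le_mul_of_nonneg_left hhead (sub_nonneg.2 h12)]

theorem avgPrice_antitoneOn (hf : AntitoneOn f (Icc 0 M)) (h0 : f 0 = 1) :
    AntitoneOn (avgPrice f) (Icc 0 M) := by
  intro t₁ ht₁ t₂ ht₂ h12
  rcases ht₂.1.eq_or_lt with rfl | h2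
  · rw [le_antisymm h12 ht₁.1]
  rcases ht₁.1.eq_or_lt with rfl | h1
  · simpa [h0] using avgPrice_le (hf.mono (Icc_subset_Icc le_rfl ht₂.2)) h2
  · exact avgPrice_antitoneOn_Ioc hf ⟨h1, ht₁.2⟩ ⟨h2, ht₂.2⟩ h12

theorem continuousOn_avgPrice (hc : ContinuousOn f (Icc 0 M)) (hf : AntitoneOn f (Icc 0 M))
    (h0 : f 0 = 1) : ContinuousOn (avgPrice f) (Icc 0 M) := by
  intro t ht
  rcases ht.1.eq_or_lt with rfl | htpos
  · have hf0 : Tendsto f (𝓝[Icc 0 M] 0) (𝓝 1) := h0 ▸ hc 0 ht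
    rw [ContinuousWithinAt, avgPrice_zero]
    refine tendsto_of_tendsto_of_tendsto_of_le_of_le' hf0 tendsto_const_nhds ?_ ?_ <;>
      filter_upwards [self_mem_nhdsWithin] with x hx
    · rcases hx.1.eq_or_lt with rfl | hx0
      · simp [h0]
      · exact le_avgPrice (hf.mono (Icc_subset_Icc le_rfl hx.2)) hx0
    · rcases hx.1.eq_or_lt with rfl | hx0
      · simp
      · exact h0 ▸ avgPrice_le (hf.mono (Icc_subset_Icc le_rfl hx.2)) hx0
  · have hprim : ContinuousOn (fun x => ∫ σ in (0:ℝ)..x, f σ) (Icc 0 M) := by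
      simpa [uIcc_of_le (ht.1.trans ht.2)] using intervalIntegral.continuousOn_primitive_interval'
        (intervalIntegrable_of_antitoneOn hf (ht.1.trans ht.2)) left_mem_uIcc
    refine ((hprim t ht).div continuousWithinAt_id htpos.ne').congr_of_eventuallyEq ?_
      (avgPrice_of_ne_zero htpos.ne')
    filter_upwards [nhdsWithin_le_nhds (isOpen_ne.mem_nhds htpos.ne')] with x hx
    exact avgPrice_of_ne_zero hx

theorem hasDerivAt_mul_avgPrice (hc : ContinuousOn f (Icc 0 M)) {c x : ℝ} (hx : 0 < c + x)
    (hxM : c + x < M) :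
    HasDerivAt (fun z => z * avgPrice f (c + z))
      ((c * avgPrice f (c + x) + x * f (c + x)) / (c + x)) x := by
  have hcont : ContinuousAt f (c + x) := hc.continuousAt (Icc_mem_nhds hx hxM)
  have hprim : HasDerivAt (fun z => ∫ σ in (0:ℝ)..z, f σ) (f (c + x)) (c + x) :=
    intervalIntegral.integral_hasDerivAt_right
      (hc.mono (uIcc_of_le hx.le ▸ Icc_subset_Icc le_rfl hxM.le)).intervalIntegrable
      ⟨Icc 0 M, Icc_mem_nhds hx hxM, hc.aestronglyMeasurable measurableSet_Icc⟩ hcont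
  have hshift : HasDerivAt (fun z : ℝ => c + z) 1 x := (hasDerivAt_id x).const_add c
  have hquot := ((hasDerivAt_id x).mul (hprim.comp x hshift)).div hshift hx.ne'
  have hlocal : (fun z => z * avgPrice f (c + z)) =ᶠ[𝓝 x]
      fun z => id z * (∫ σ in (0:ℝ)..c + z, f σ) / (c + z) := by
    filter_upwards [(continuous_const.add continuous_id).continuousAt.eventually
      (isOpen_ne.mem_nhds hx.ne')] with z (hz : c + z ≠ 0)
    rw [avgPrice_of_ne_zero hz, id, mul_div_assoc]
  refine (hquot.congr_of_eventuallyEq hlocal).congr_deriv ?_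
  simp only [Pi.mul_apply, Function.comp_apply, id, avgPrice_of_ne_zero hx.ne']
  field_simp
  ring

end AveragePrice

section BankCost

variable {f : ℝ → ℝ} {M r hi c : ℝ}

/-- Bank `i`'s objective in (P2) when it sells `x` and the other banks sell `c` in total. -/
def bankCost (r hi : ℝ) (f : ℝ → ℝ) (c x : ℝ) : ℝ :=
  x + r * hi - (1 + r) * (x * avgPrice f (c + x))

def marginalCost (r : ℝ) (f : ℝ → ℝ) (T x : ℝ) : ℝ :=
  1 - (1 + r) * (((T - x) * avgPrice f T + x * f T) / T)

theorem hasDerivAt_bankCost (hfc : ContinuousOn f (Icc 0 M)) {x : ℝ} (hx : 0 < c + x)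
    (hxM : c + x < M) : HasDerivAt (bankCost r hi f c) (marginalCost r f (c + x) x) x := by
  have hderiv := ((hasDerivAt_id x).add_const (r * hi)).sub
    ((hasDerivAt_mul_avgPrice hfc hx hxM).const_mul (1 + r))
  exact hderiv.congr_deriv (by simp [marginalCost])

theorem continuousOn_bankCost (hfc : ContinuousOn f (Icc 0 M)) (hf : AntitoneOn f (Icc 0 M))
    (h0 : f 0 = 1) {α β : ℝ} (hα : 0 ≤ c + α) (hβ : c + β ≤ M) :
    ContinuousOn (bankCost r hi f c) (Icc α β) := by
  have hV : ContinuousOn (fun x => avgPrice f (c + x)) (Icc α β) :=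
    (continuousOn_avgPrice hfc hf h0).comp (continuousOn_const.add continuousOn_id)
      fun x hx => ⟨by linarith [hx.1], by linarith [hx.2]⟩
  exact (continuousOn_id.add continuousOn_const).sub (continuousOn_const.mul
    (continuousOn_id.mul hV))

theorem marginalCost_le_marginalCost (hf : AntitoneOn f (Icc 0 M)) (hr : 0 ≤ r)
    {x₁ x₂ : ℝ} (hc : 0 ≤ c) (hx₁ : 0 ≤ x₁) (h₁₂ : x₁ ≤ x₂) (hpos : 0 < c + x₁)
    (hM : c + x₂ ≤ M) : marginalCost r f (c + x₁) x₁ ≤ marginalCost r f (c + x₂) x₂ := by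
  have hm₁ : c + x₁ ∈ Icc 0 M := ⟨hpos.le, by linarith⟩
  have hm₂ : c + x₂ ∈ Icc 0 M := ⟨by linarith, hM⟩
  have hf₁₂ : f (c + x₂) ≤ f (c + x₁) := hf hm₁ hm₂ (by linarith)
  have hV₁₂ : avgPrice f (c + x₂) ≤ avgPrice f (c + x₁) :=
    avgPrice_antitoneOn_Ioc hf ⟨hpos, hm₁.2⟩ ⟨by linarith, hM⟩ (by linarith)
  have hfV : f (c + x₁) ≤ avgPrice f (c + x₁) :=
    le_avgPrice (hf.mono (Icc_subset_Icc le_rfl hm₁.2)) hpos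
  have hpos₂ : 0 < c + x₂ := by linarith
  -- the weight `c / (c + x)` on the larger price `avgPrice` decreases along with both prices
  have hW : (c * avgPrice f (c + x₂) + x₂ * f (c + x₂)) / (c + x₂)
      ≤ (c * avgPrice f (c + x₁) + x₁ * f (c + x₁)) / (c + x₁) :=
    calc (c * avgPrice f (c + x₂) + x₂ * f (c + x₂)) / (c + x₂)
        ≤ (c * avgPrice f (c + x₁) + x₂ * f (c + x₁)) / (c + x₂) := by
          have := hx₁.trans h₁₂
          gcongr
      _ ≤ (c * avgPrice f (c + x₁) + x₁ * f (c + x₁)) / (c + x₁) := by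
          rw [div_le_div_iff₀ hpos₂ hpos]
          nlinarith [mul_nonneg (mul_nonneg hc (sub_nonneg.2 h₁₂)) (sub_nonneg.2 hfV)]
  simp only [marginalCost, add_sub_cancel_right]
  exact sub_le_sub_left (mul_le_mul_of_nonneg_left hW (by linarith)) 1

theorem monotoneOn_bankCost (hfc : ContinuousOn f (Icc 0 M)) (hf : AntitoneOn f (Icc 0 M))
    (h0 : f 0 = 1) (hr : 0 ≤ r) {y u : ℝ} (hc : 0 ≤ c) (hy : 0 ≤ y) (hpos : 0 < c + y)
    (huM : c + u ≤ M) (hmc : 0 ≤ marginalCost r f (c + y) y) :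
    MonotoneOn (bankCost r hi f c) (Icc y u) := by
  refine monotoneOn_of_deriv_nonneg (convex_Icc y u)
    (continuousOn_bankCost hfc hf h0 hpos.le huM) ?_ fun z hz => ?_
  · intro z hz
    rw [interior_Icc] at hz
    exact (hasDerivAt_bankCost hfc (by linarith [hz.1]) (by linarith [hz.2]))
      |>.differentiableAt.differentiableWithinAt
  · rw [interior_Icc] at hz
    rw [(hasDerivAt_bankCost hfc (by linarith [hz.1]) (by linarith [hz.2])).deriv]
    exact hmc.trans (marginalCost_le_marginalCost hf hr hc hy hz.1.le hpos (by linarith [hz.2]))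

theorem antitoneOn_bankCost (hfc : ContinuousOn f (Icc 0 M)) (hf : AntitoneOn f (Icc 0 M))
    (h0 : f 0 = 1) (hr : 0 ≤ r) {l y : ℝ} (hc : 0 ≤ c) (hl : 0 ≤ l) (hyM : c + y ≤ M)
    (hmc : marginalCost r f (c + y) y ≤ 0) :
    AntitoneOn (bankCost r hi f c) (Icc l y) := by
  refine antitoneOn_of_deriv_nonpos (convex_Icc l y)
    (continuousOn_bankCost hfc hf h0 (by linarith) hyM) ?_ fun z hz => ?_
  · intro z hz
    rw [interior_Icc] at hz
    exact (hasDerivAt_bankCost hfc (by linarith [hz.1]) (by linarith [hz.2]))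
      |>.differentiableAt.differentiableWithinAt
  · rw [interior_Icc] at hz
    rw [(hasDerivAt_bankCost hfc (by linarith [hz.1]) (by linarith [hz.2])).deriv]
    exact (marginalCost_le_marginalCost hf hr hc (by linarith [hz.1]) hz.2.le
      (by linarith [hz.1]) hyM).trans hmc

theorem isMinOn_bankCost (hfc : ContinuousOn f (Icc 0 M)) (hf : AntitoneOn f (Icc 0 M))
    (h0 : f 0 = 1) (hr : 0 ≤ r) {l y u : ℝ} (hc : 0 ≤ c) (hl : 0 ≤ l) (hly : l ≤ y)
    (hyu : y ≤ u) (huM : c + u ≤ M) (hpos : 0 < c + y)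
    (hup : y < u → 0 ≤ marginalCost r f (c + y) y)
    (hdown : l < y → marginalCost r f (c + y) y ≤ 0) :
    IsMinOn (bankCost r hi f c) (Icc l u) y := by
  refine isMinOn_iff.2 fun x hx => ?_
  rcases lt_trichotomy x y with hxy | rfl | hyx
  · exact antitoneOn_bankCost hfc hf h0 hr hc hl (by linarith) (hdown (hx.1.trans_lt hxy))
      ⟨hx.1, hxy.le⟩ ⟨hly, le_rfl⟩ hxy.le
  · exact le_rfl
  · exact monotoneOn_bankCost hfc hf h0 hr hc (hl.trans hly) hpos huM (hup (hyx.trans_le hx.2))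
      ⟨le_rfl, hyu⟩ ⟨hyx.le, hx.2⟩ hyx.le

def criticalSale (r : ℝ) (f : ℝ → ℝ) (T : ℝ) : ℝ :=
  ((1 + r) * avgPrice f T - 1) * T / ((1 + r) * (avgPrice f T - f T))

theorem marginalCost_monotone {T : ℝ} (hr : 0 ≤ r) (hT : 0 < T) (hfV : f T ≤ avgPrice f T) :
    Monotone (marginalCost r f T) := by
  intro x₁ x₂ h₁₂
  have hW : ((T - x₂) * avgPrice f T + x₂ * f T) / T
      ≤ ((T - x₁) * avgPrice f T + x₁ * f T) / T := by
    refine div_le_div_of_nonneg_right ?_ hT.le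
    nlinarith [mul_nonneg (sub_nonneg.2 h₁₂) (sub_nonneg.2 hfV)]
  exact sub_le_sub_left (mul_le_mul_of_nonneg_left hW (by linarith)) 1

theorem marginalCost_criticalSale {T : ℝ} (hr : 0 ≤ r) (hT : 0 < T)
    (hfV : f T < avgPrice f T) : marginalCost r f T (criticalSale r f T) = 0 := by
  have : avgPrice f T - f T ≠ 0 := (sub_pos.2 hfV).ne'
  have : 1 + r ≠ 0 := by positivity
  simp only [marginalCost, criticalSale]
  field_simp
  ring

theorem div_le_criticalSale {K T : ℝ} (hr : 0 ≤ r) (hK : 0 < K) (hT : 0 < T)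
    (hfV : f T < avgPrice f T) (hgap : avgPrice f T - f T ≤ K * T)
    (hprice : r / 2 ≤ (1 + r) * avgPrice f T - 1) :
    r / (2 * (1 + r) * K) ≤ criticalSale r f T := by
  have hgap₀ : 0 < avgPrice f T - f T := sub_pos.2 hfV
  rw [criticalSale, div_le_div_iff₀ (by positivity) (by positivity)]
  nlinarith [mul_le_mul_of_nonneg_left hgap (by positivity : (0:ℝ) ≤ r * (1 + r)),
    mul_le_mul_of_nonneg_right hprice (by positivity : (0:ℝ) ≤ 2 * (1 + r) * K * T)]

end BankCost

section Clearing

variable {n : ℕ} {a h : Fin n → ℝ} {r M : ℝ} {f g : ℝ → ℝ} {s : Fin n → ℝ} {T : ℝ}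

theorem setOf_memD_eq_pi : {s | memD n a s} = univ.pi fun i => Icc 0 (a i) := by
  ext s
  exact ⟨fun hs i _ => hs i, fun hs i => hs i (mem_univ i)⟩

theorem memD.single_le_sum (hs : memD n a s) (i : Fin n) : s i ≤ ∑ j, s j :=
  Finset.single_le_sum (fun j _ => (hs j).1) (Finset.mem_univ i)

theorem memD.sum_sub_le (hs : memD n a s) (i : Fin n) : ∑ j, s j - s i ≤ ∑ j, a j - a i := by
  have := Finset.single_le_sum (f := fun j => a j - s j) (fun j _ => sub_nonneg.2 (hs j).2)
    (Finset.mem_univ i)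
  simp only [Finset.sum_sub_distrib] at this
  linarith

theorem memD.sum_mem_Icc (hs : memD n a s) : ∑ j, s j ∈ Icc 0 (∑ j, a j) :=
  ⟨Finset.sum_nonneg fun j _ => (hs j).1, Finset.sum_le_sum fun j _ => (hs j).2⟩

theorem memD.update (hs : memD n a s) {i : Fin n} {x : ℝ} (hx : x ∈ Icc 0 (a i)) :
    memD n a (Function.update s i x) := by
  intro j
  rcases eq_or_ne j i with rfl | hj
  · rwa [Function.update_self]
  · rw [Function.update_of_ne hj]
    exact hs j

theorem sum_update_eq (s : Fin n → ℝ) (i : Fin n) (x : ℝ) :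
    ∑ j, Function.update s i x j = ∑ j, s j - s i + x := by
  rw [Finset.sum_update_of_mem (Finset.mem_univ i), ← Finset.sum_erase_add _ _
    (Finset.mem_univ i), Finset.sdiff_singleton_eq_erase]
  ring

theorem obj_update_eq_bankCost (i : Fin n) (x : ℝ) :
    obj n r h (vwap n f) i (Function.update s i x) = bankCost r (h i) f (∑ j, s j - s i) x := by
  simp only [obj, vwap_eq_avgPrice, sum_update_eq, Function.update_self, bankCost]
  ring

theorem feasP2_iff {q : ℝ} {qb : Fin n → ℝ} {i : Fin n} {x : ℝ} :
    feasP2 n a h q qb i x ↔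
      x ∈ Icc (max 0 ((h i - a i * q) / (qb i - q))) (min (a i) (h i / qb i)) := by
  simp only [feasP2, mem_Icc, max_le_iff, le_min_iff]
  tauto

def clearingEquilibria (n : ℕ) (a h : Fin n → ℝ) (r : ℝ) (f g : ℝ → ℝ) : Set (Fin n → ℝ) :=
  {s | memD n a s ∧
    NashP2 n a h r (g (∑ i, s i)) (fun _ => avgPrice f (∑ i, s i)) (vwap n f) s}

theorem clearingVWAP_iff {q : ℝ} {qb : Fin n → ℝ} :
    ClearingVWAP n a h r f g q qb ↔ ∃ s ∈ clearingEquilibria n a h r f g,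
      q = g (∑ i, s i) ∧ qb = fun _ => avgPrice f (∑ i, s i) := by
  constructor
  · rintro ⟨s, hs, hN, rfl, hqb⟩
    obtain rfl : qb = fun i => vwap n f i s := funext hqb
    exact ⟨s, ⟨hs, hN⟩, rfl, rfl⟩
  · rintro ⟨s, ⟨hs, hN⟩, rfl, rfl⟩
    exact ⟨s, hs, hN, rfl, fun _ => rfl⟩

/-- The feasible sales of bank `i` at the clearing prices of a total sale `T` are
`Icc (lowerBound ..) (upperBound ..)`. The cap at `aᵢ` makes this interval `{aᵢ}` when
`hᵢ > aᵢ q̄`, where (P2) forces the bank to sell everything. -/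
def lowerBound (a h : Fin n → ℝ) (f g : ℝ → ℝ) (i : Fin n) (T : ℝ) : ℝ :=
  min (a i) (max 0 ((h i - a i * g T) / (avgPrice f T - g T)))

def upperBound (a h : Fin n → ℝ) (f : ℝ → ℝ) (i : Fin n) (T : ℝ) : ℝ :=
  min (a i) (h i / avgPrice f T)

def response (a h : Fin n → ℝ) (r : ℝ) (f g : ℝ → ℝ) (i : Fin n) (T : ℝ) : ℝ :=
  max (lowerBound a h f g i T) (min (criticalSale r f T) (upperBound a h f i T))

theorem lowerBound_eq_of_le {i : Fin n} (hgV : g T < avgPrice f T)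
    (hu : h i ≤ a i * avgPrice f T) (ha : 0 ≤ a i) :
    lowerBound a h f g i T = max 0 ((h i - a i * g T) / (avgPrice f T - g T)) := by
  refine min_eq_right (max_le ha ?_)
  rw [div_le_iff₀ (sub_pos.2 hgV)]
  linarith

theorem lowerBound_eq_of_lt {i : Fin n} (hgV : g T < avgPrice f T)
    (hforced : a i * avgPrice f T < h i) : lowerBound a h f g i T = a i := by
  refine min_eq_left (le_max_of_le_right ?_)
  rw [le_div_iff₀ (sub_pos.2 hgV)]
  linarith

theorem upperBound_eq_of_lt {i : Fin n} (hV : 0 < avgPrice f T)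
    (hforced : a i * avgPrice f T < h i) : upperBound a h f i T = a i :=
  min_eq_left ((le_div_iff₀ hV).2 hforced.le)

end Clearing

structure VWAPModel (n : ℕ) (a h : Fin n → ℝ) (r M : ℝ) (f g : ℝ → ℝ) : Prop where
  ha : ∀ i, 0 < a i
  hh : ∀ i, 0 < h i
  hr : 0 ≤ r
  hM : ∑ i, a i ≤ M
  hf : Assumption2 M f
  hg_pos : ∀ x ∈ Icc (0 : ℝ) M, 0 < g x
  hg_cont : ContinuousOn g (Icc 0 M)
  hg_lt : ∀ s, memD n a s → ∀ i, g (∑ j, s j) < vwap n f i s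

namespace VWAPModel

variable {n : ℕ} {a h : Fin n → ℝ} {r M : ℝ} {f g : ℝ → ℝ} {s : Fin n → ℝ} {T : ℝ}

theorem Icc_subset (S : VWAPModel n a h r M f g) : Icc 0 (∑ j, a j) ⊆ Icc 0 M :=
  Icc_subset_Icc le_rfl S.hM

theorem sum_pos (S : VWAPModel n a h r M f g) (i : Fin n) : 0 < ∑ j, a j :=
  Finset.sum_pos (fun j _ => S.ha j) ⟨i, Finset.mem_univ i⟩

theorem f_continuousOn (S : VWAPModel n a h r M f g) : ContinuousOn f (Icc 0 M) :=
  S.hf.smooth.continuousOn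

theorem f_antitoneOn (S : VWAPModel n a h r M f g) : AntitoneOn f (Icc 0 M) :=
  S.hf.anti.antitoneOn

theorem continuousOn_avgPrice (S : VWAPModel n a h r M f g) :
    ContinuousOn (avgPrice f) (Icc 0 M) :=
  _root_.continuousOn_avgPrice S.f_continuousOn S.f_antitoneOn S.hf.f_zero

theorem avgPrice_pos (S : VWAPModel n a h r M f g) (hT : T ∈ Icc 0 M) : 0 < avgPrice f T := by
  rcases hT.1.eq_or_lt with rfl | hT₀
  · simp
  · exact (S.hf.mem T hT).1.trans_le
      (le_avgPrice (S.f_antitoneOn.mono (Icc_subset_Icc le_rfl hT.2)) hT₀)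

theorem avgPrice_le_one (S : VWAPModel n a h r M f g) (hT : T ∈ Icc 0 M) :
    avgPrice f T ≤ 1 := by
  simpa using avgPrice_antitoneOn S.f_antitoneOn S.hf.f_zero ⟨le_rfl, hT.1.trans hT.2⟩ hT hT.1

theorem f_lt_avgPrice (S : VWAPModel n a h r M f g) (hT : T ∈ Ioc 0 M) : f T < avgPrice f T :=
  lt_avgPrice (S.hf.anti.mono (Icc_subset_Icc le_rfl hT.2)) hT.1

theorem g_lt_avgPrice (S : VWAPModel n a h r M f g) (i : Fin n) (hT : T ∈ Icc 0 (∑ j, a j)) :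
    g T < avgPrice f T := by
  have hA := S.sum_pos i
  have hscale : T / ∑ j, a j ∈ Icc 0 1 := ⟨div_nonneg hT.1 hA.le, (div_le_one hA).2 hT.2⟩
  have hs : memD n a fun j => T / (∑ j, a j) * a j := fun j =>
    ⟨mul_nonneg hscale.1 (S.ha j).le, mul_le_of_le_one_left (S.ha j).le hscale.2⟩
  have hsum : ∑ j, T / (∑ j, a j) * a j = T := by
    rw [← Finset.mul_sum, div_mul_cancel₀ _ hA.ne']
  simpa [vwap_eq_avgPrice, hsum] using S.hg_lt _ hs i

theorem lowerBound_le_upperBound (S : VWAPModel n a h r M f g) (i : Fin n)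
    (hT : T ∈ Icc 0 (∑ j, a j)) : lowerBound a h f g i T ≤ upperBound a h f i T := by
  have hV := S.avgPrice_pos (S.Icc_subset hT)
  refine le_min (min_le_left _ _) ?_
  rcases le_or_gt (a i) (h i / avgPrice f T) with hle | hlt
  · exact (min_le_left _ _).trans hle
  refine (min_le_right _ _).trans (max_le (div_nonneg (S.hh i).le hV.le) ?_)
  rw [div_le_div_iff₀ (sub_pos.2 (S.g_lt_avgPrice i hT)) hV]
  rw [div_lt_iff₀ hV] at hlt
  nlinarith [S.hg_pos T (S.Icc_subset hT)]

theorem lowerBound_nonneg (S : VWAPModel n a h r M f g) (i : Fin n) :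
    0 ≤ lowerBound a h f g i T :=
  le_min (S.ha i).le (le_max_left _ _)

theorem response_mem_Icc (S : VWAPModel n a h r M f g) (i : Fin n)
    (hT : T ∈ Icc 0 (∑ j, a j)) :
    response a h r f g i T ∈ Icc (lowerBound a h f g i T) (upperBound a h f i T) :=
  ⟨le_max_left _ _, max_le (S.lowerBound_le_upperBound i hT) (min_le_right _ _)⟩

theorem continuousOn_lowerBound (S : VWAPModel n a h r M f g) (i : Fin n) :
    ContinuousOn (lowerBound a h f g i) (Icc 0 (∑ j, a j)) := by
  have hV := S.continuousOn_avgPrice.mono S.Icc_subset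
  have hg := S.hg_cont.mono S.Icc_subset
  exact continuousOn_const.inf (continuousOn_const.sup
    ((continuousOn_const.sub (continuousOn_const.mul hg)).div (hV.sub hg)
      fun T hT => (sub_pos.2 (S.g_lt_avgPrice i hT)).ne'))

theorem continuousOn_upperBound (S : VWAPModel n a h r M f g) (i : Fin n) :
    ContinuousOn (upperBound a h f i) (Icc 0 (∑ j, a j)) :=
  continuousOn_const.inf (continuousOn_const.div (S.continuousOn_avgPrice.mono S.Icc_subset)
    fun _ hT => (S.avgPrice_pos (S.Icc_subset hT)).ne')

theorem continuousOn_response (S : VWAPModel n a h r M f g) (i : Fin n) :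
    ContinuousOn (response a h r f g i) (Ioc 0 (∑ j, a j)) := by
  have hsub : Ioc 0 (∑ j, a j) ⊆ Icc 0 M := Ioc_subset_Icc_self.trans S.Icc_subset
  have hV := S.continuousOn_avgPrice.mono hsub
  have hcrit : ContinuousOn (criticalSale r f) (Ioc 0 (∑ j, a j)) :=
    (((continuousOn_const.mul hV).sub continuousOn_const).mul continuousOn_id).div
      (continuousOn_const.mul (hV.sub (S.f_continuousOn.mono hsub))) fun T hT =>
        mul_ne_zero (by linarith [S.hr])
          (sub_pos.2 (S.f_lt_avgPrice ⟨hT.1, (hsub hT).2⟩)).ne'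
  exact ((S.continuousOn_lowerBound i).mono Ioc_subset_Icc_self).sup
    (hcrit.inf ((S.continuousOn_upperBound i).mono Ioc_subset_Icc_self))

theorem nash_clause_iff (S : VWAPModel n a h r M f g) (hs : memD n a s) (i : Fin n) :
    ((h i ≤ a i * avgPrice f (∑ j, s j) →
        feasP2 n a h (g (∑ j, s j)) (fun _ => avgPrice f (∑ j, s j)) i (s i) ∧
        ∀ x, feasP2 n a h (g (∑ j, s j)) (fun _ => avgPrice f (∑ j, s j)) i x →
          obj n r h (vwap n f) i s ≤ obj n r h (vwap n f) i (Function.update s i x)) ∧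
      (a i * avgPrice f (∑ j, s j) < h i → s i = a i)) ↔
    s i ∈ Icc (lowerBound a h f g i (∑ j, s j)) (upperBound a h f i (∑ j, s j)) ∧
      IsMinOn (fun x => obj n r h (vwap n f) i (Function.update s i x))
        (Icc (lowerBound a h f g i (∑ j, s j)) (upperBound a h f i (∑ j, s j))) (s i) := by
  have hgV := S.g_lt_avgPrice i hs.sum_mem_Icc
  have hV := S.avgPrice_pos (S.Icc_subset hs.sum_mem_Icc)
  simp only [isMinOn_iff, Function.update_eq_self, feasP2_iff]
  by_cases hu : h i ≤ a i * avgPrice f (∑ j, s j)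
  · rw [lowerBound_eq_of_le hgV hu (S.ha i).le, upperBound]
    simp only [hu, true_implies, not_lt.2 hu, false_implies, and_true]
  · have hforced := not_le.1 hu
    rw [lowerBound_eq_of_lt hgV hforced, upperBound_eq_of_lt hV hforced, Icc_self]
    simp only [hu, false_implies, hforced, true_implies, true_and, mem_singleton_iff,
      forall_eq]
    exact ⟨fun hsi => ⟨hsi, by rw [← hsi, Function.update_eq_self]⟩, And.left⟩

theorem mem_clearingEquilibria_iff (S : VWAPModel n a h r M f g) (hs : memD n a s) :
    s ∈ clearingEquilibria n a h r f g ↔ ∀ i,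
      s i ∈ Icc (lowerBound a h f g i (∑ j, s j)) (upperBound a h f i (∑ j, s j)) ∧
      IsMinOn (fun x => obj n r h (vwap n f) i (Function.update s i x))
        (Icc (lowerBound a h f g i (∑ j, s j)) (upperBound a h f i (∑ j, s j))) (s i) :=
  (and_iff_right hs).trans (forall_congr' (S.nash_clause_iff hs))

theorem continuousOn_obj (S : VWAPModel n a h r M f g) (i : Fin n) :
    ContinuousOn (obj n r h (vwap n f) i) {s | memD n a s} := by
  have hV : ContinuousOn (fun t : Fin n → ℝ => avgPrice f (∑ j, t j)) {s | memD n a s} :=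
    S.continuousOn_avgPrice.comp (continuous_finsetSum _ fun j _ => continuous_apply j).continuousOn
      fun t ht => S.Icc_subset (memD.sum_mem_Icc ht)
  have hi : ContinuousOn (fun t : Fin n → ℝ => t i) {s | memD n a s} :=
    (continuous_apply i).continuousOn
  exact (hi.mul (continuousOn_const.sub hV)).add
    (continuousOn_const.mul (continuousOn_const.sub (hi.mul hV)))

theorem isClosed_clearingEquilibria (S : VWAPModel n a h r M f g) :
    IsClosed (clearingEquilibria n a h r f g) := by
  have hD : IsClosed {s | memD n a s} :=
    setOf_memD_eq_pi (n := n) ▸ isClosed_set_pi fun i _ => isClosed_Icc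
  have hsum : MapsTo (fun s : Fin n → ℝ => ∑ j, s j) {s | memD n a s} (Icc 0 (∑ j, a j)) :=
    fun s hs => memD.sum_mem_Icc hs
  have hsumc : ContinuousOn (fun s : Fin n → ℝ => ∑ j, s j) {s | memD n a s} :=
    (continuous_finsetSum _ fun j _ => continuous_apply j).continuousOn
  have hE : clearingEquilibria n a h r f g = {s | memD n a s} ∩ ⋂ i, {s | memD n a s ∧
      s i ∈ Icc (lowerBound a h f g i (∑ j, s j)) (upperBound a h f i (∑ j, s j)) ∧
      IsMinOn (fun x => obj n r h (vwap n f) i (Function.update s i x))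
        (Icc (lowerBound a h f g i (∑ j, s j)) (upperBound a h f i (∑ j, s j))) (s i)} :=
    Set.ext fun s => ⟨fun hs => ⟨hs.1, mem_iInter.2 fun i =>
        ⟨hs.1, (S.mem_clearingEquilibria_iff hs.1).1 hs i⟩⟩,
      fun hs => (S.mem_clearingEquilibria_iff hs.1).2 fun i => (mem_iInter.1 hs.2 i).2⟩
  rw [hE]
  refine hD.inter (isClosed_iInter fun i => isClosed_setOf_isMinOn_Icc hD
    ((S.continuousOn_lowerBound i).comp hsumc hsum) ((S.continuousOn_upperBound i).comp hsumc hsum)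
    (continuous_apply i).continuousOn ?_ (fun _ _ => S.lowerBound_nonneg i)
    (fun _ _ => min_le_left _ _))
  exact (S.continuousOn_obj i).comp (continuous_fst.update i continuous_snd).continuousOn
    fun z hz => memD.update hz.1 hz.2

theorem isCompact_clearingEquilibria (S : VWAPModel n a h r M f g) :
    IsCompact (clearingEquilibria n a h r f g) :=
  (isCompact_univ_pi fun _ => isCompact_Icc).of_isClosed_subset S.isClosed_clearingEquilibria
    fun _ hs => (setOf_memD_eq_pi (a := a)).subset hs.1

theorem response_mem_clearingEquilibria (S : VWAPModel n a h r M f g)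
    (hT : T ∈ Ioc 0 (∑ j, a j)) (hfix : ∑ i, response a h r f g i T = T) :
    (fun i => response a h r f g i T) ∈ clearingEquilibria n a h r f g := by
  set s := fun i => response a h r f g i T
  have hmem : ∀ i, s i ∈ Icc (lowerBound a h f g i T) (upperBound a h f i T) :=
    fun i => S.response_mem_Icc i (Ioc_subset_Icc_self hT)
  have hs : memD n a s := fun i =>
    ⟨(S.lowerBound_nonneg i).trans (hmem i).1, (hmem i).2.trans (min_le_left _ _)⟩
  have hsum : ∑ j, s j = T := hfix
  refine (S.mem_clearingEquilibria_iff hs).2 fun i => ?_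
  simp only [hsum, obj_update_eq_bankCost]
  refine ⟨hmem i, ?_⟩
  have hTM : T ≤ M := hT.2.trans S.hM
  have hfV : f T < avgPrice f T := S.f_lt_avgPrice ⟨hT.1, hTM⟩
  have hroot := marginalCost_criticalSale S.hr hT.1 hfV
  have hmono := marginalCost_monotone S.hr hT.1 hfV.le
  refine isMinOn_bankCost S.f_continuousOn S.f_antitoneOn S.hf.f_zero S.hr
    (sub_nonneg.2 (hsum ▸ hs.single_le_sum i)) (S.lowerBound_nonneg i) (hmem i).1 (hmem i).2
    ?_ (by simpa using hT.1) (fun hlt => ?_) (fun hlt => ?_)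
  · have hub : upperBound a h f i T ≤ a i := min_le_left _ _
    have hrest := hs.sum_sub_le i
    rw [hsum] at hrest
    linarith [S.hM]
  · rw [sub_add_cancel]
    exact hroot ▸ hmono (le_max_min_of_max_min_lt hlt)
  · rw [sub_add_cancel]
    exact hroot ▸ hmono (max_min_le_of_lt_max_min hlt)

theorem exists_sum_response_eq (S : VWAPModel n a h r M f g) {T₀ : ℝ}
    (hT₀ : T₀ ∈ Ioc 0 (∑ j, a j)) (hle : T₀ ≤ ∑ i, response a h r f g i T₀) :
    ∃ T ∈ Ioc 0 (∑ j, a j), ∑ i, response a h r f g i T = T := by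
  have hsub : Icc T₀ (∑ j, a j) ⊆ Ioc 0 (∑ j, a j) := Icc_subset_Ioc_iff hT₀.2 |>.2 ⟨hT₀.1, le_rfl⟩
  have hcont : ContinuousOn (fun T => ∑ i, response a h r f g i T - T) (Icc T₀ (∑ j, a j)) :=
    (continuousOn_finsetSum _ fun i _ => (S.continuousOn_response i).mono hsub).sub continuousOn_id
  have hend : ∑ i, response a h r f g i (∑ j, a j) - ∑ j, a j ≤ 0 :=
    sub_nonpos.2 (Finset.sum_le_sum fun i _ =>
      ((S.response_mem_Icc i ⟨hT₀.1.le.trans hT₀.2, le_rfl⟩).2.trans (min_le_left _ _)))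
  obtain ⟨T, hT, hroot⟩ := intermediate_value_Icc' hT₀.2 hcont ⟨hend, sub_nonneg.2 hle⟩
  exact ⟨T, hsub hT, sub_eq_zero.1 hroot⟩

theorem exists_eventually_le_response_of_pos (S : VWAPModel n a h r M f g) (i : Fin n)
    (hr : 0 < r) : ∃ ρ > 0, ∀ᶠ T in 𝓝[>] 0, ρ ≤ response a h r f g i T := by
  have hA := S.sum_pos i
  have hM : 0 < M := hA.trans_le S.hM
  have hIcc : Icc 0 M ∈ 𝓝[>] (0 : ℝ) := Icc_mem_nhdsGT hM
  obtain ⟨K, hK, hgap⟩ := exists_eventually_sub_le_mul hIcc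
    (S.hf.smooth.differentiableOn two_ne_zero 0 ⟨le_rfl, hM.le⟩)
  have hV : Tendsto (avgPrice f) (𝓝[>] 0) (𝓝 1) :=
    avgPrice_zero (f := f) ▸ (S.continuousOn_avgPrice 0 ⟨le_rfl, hM.le⟩).mono_of_mem_nhdsWithin hIcc
  have hprice : ∀ᶠ T in 𝓝[>] 0, r / 2 ≤ (1 + r) * avgPrice f T - 1 := by
    have hlim := (tendsto_const_nhds (x := 1 + r)).mul hV |>.sub_const 1
    refine hlim.eventually (eventually_ge_nhds ?_)
    linarith
  refine ⟨min (r / (2 * (1 + r) * K)) (min (a i) (h i)),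
    lt_min (by positivity) (lt_min (S.ha i) (S.hh i)), ?_⟩
  filter_upwards [hgap, hprice, Ioc_mem_nhdsGT hA] with T hgapT hpriceT hT
  have hTM : T ∈ Icc 0 M := S.Icc_subset (Ioc_subset_Icc_self hT)
  have hV₁ := S.avgPrice_le_one hTM
  have hVpos := S.avgPrice_pos hTM
  have hcrit := div_le_criticalSale S.hr hK hT.1 (S.f_lt_avgPrice ⟨hT.1, hTM.2⟩)
    (by linarith [S.hf.f_zero]) hpriceT
  have hub : min (a i) (h i) ≤ upperBound a h f i T :=
    min_le_min le_rfl (le_div_self (S.hh i).le hVpos hV₁)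
  exact (min_le_min hcrit hub).trans (le_max_right _ _)

theorem exists_eventually_le_response_of_lt (S : VWAPModel n a h r M f g) (i : Fin n)
    (hgi : a i * g 0 < h i) : ∃ ρ > 0, ∀ᶠ T in 𝓝[>] 0, ρ ≤ response a h r f g i T := by
  have hA := S.sum_pos i
  have h0 : (0 : ℝ) ∈ Icc 0 (∑ j, a j) := ⟨le_rfl, hA.le⟩
  have hlb : Tendsto (lowerBound a h f g i) (𝓝[>] 0) (𝓝 (lowerBound a h f g i 0)) :=
    (S.continuousOn_lowerBound i 0 h0).mono_of_mem_nhdsWithin (Icc_mem_nhdsGT hA)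
  have hlb₀ : 0 < lowerBound a h f g i 0 := by
    have hg₀ := S.g_lt_avgPrice i h0
    rw [avgPrice_zero] at hg₀
    simp only [lowerBound, avgPrice_zero]
    exact lt_min (S.ha i) (lt_max_of_lt_right (div_pos (by linarith) (by linarith)))
  refine ⟨lowerBound a h f g i 0 / 2, half_pos hlb₀, ?_⟩
  filter_upwards [hlb.eventually (eventually_ge_nhds (half_lt_self hlb₀))] with T hT
  exact hT.trans (le_max_left _ _)

theorem zero_mem_clearingEquilibria (S : VWAPModel n a h r M f g) (hr : r = 0)
    (hg : ∀ i, h i ≤ a i * g 0) : 0 ∈ clearingEquilibria n a h r f g := by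
  have hD : memD n a 0 := fun i => ⟨le_rfl, (S.ha i).le⟩
  refine (S.mem_clearingEquilibria_iff hD).2 fun i => ?_
  have h0 : (0 : ℝ) ∈ Icc 0 (∑ j, a j) := ⟨le_rfl, Finset.sum_nonneg fun j _ => (S.ha j).le⟩
  have hlb : lowerBound a h f g i 0 ≤ 0 := by
    have hg₀ := S.g_lt_avgPrice i h0
    rw [avgPrice_zero] at hg₀
    simp only [lowerBound, avgPrice_zero]
    exact (min_le_right _ _).trans
      (max_le le_rfl (div_nonpos_of_nonpos_of_nonneg (by linarith [hg i]) (by linarith)))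
  simp only [Pi.zero_apply, Finset.sum_const_zero, obj_update_eq_bankCost]
  refine ⟨⟨hlb, S.lowerBound_nonneg i |>.trans (S.lowerBound_le_upperBound i h0)⟩,
    isMinOn_iff.2 fun x hx => ?_⟩
  have hx₀ : 0 ≤ x := (S.lowerBound_nonneg i).trans hx.1
  have hxM : x ∈ Icc 0 M :=
    S.Icc_subset ⟨hx₀, hx.2.trans ((min_le_left _ _).trans (Finset.single_le_sum
      (fun j _ => (S.ha j).le) (Finset.mem_univ i)))⟩
  have hV₁ := S.avgPrice_le_one hxM
  simp only [bankCost, hr, sub_zero, zero_add, zero_mul, add_zero, mul_zero, one_mul]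
  nlinarith

theorem zero_mem_of_sum_response_lt (S : VWAPModel n a h r M f g) (i₀ : Fin n)
    (hlt : ∀ T ∈ Ioc 0 (∑ j, a j), ∑ i, response a h r f g i T < T) :
    0 ∈ clearingEquilibria n a h r f g := by
  have hA := S.sum_pos i₀
  have no_floor : ∀ i, ∀ ρ > 0, ¬ ∀ᶠ T in 𝓝[>] 0, ρ ≤ response a h r f g i T := by
    intro i ρ hρ hev
    obtain ⟨T, hρT, hTρ, hT⟩ := (hev.and
      (((eventually_lt_nhds hρ).filter_mono nhdsWithin_le_nhds).and (Ioc_mem_nhdsGT hA))).exists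
    have hi : response a h r f g i T ≤ ∑ i, response a h r f g i T :=
      Finset.single_le_sum (fun j _ => (S.lowerBound_nonneg j).trans
        (S.response_mem_Icc j (Ioc_subset_Icc_self hT)).1) (Finset.mem_univ i)
    linarith [hlt T hT]
  refine S.zero_mem_clearingEquilibria ?_ fun i => ?_
  · by_contra hr
    obtain ⟨ρ, hρ, hev⟩ := S.exists_eventually_le_response_of_pos i₀ (S.hr.lt_of_ne' hr)
    exact no_floor i₀ ρ hρ hev
  · by_contra hgi
    obtain ⟨ρ, hρ, hev⟩ := S.exists_eventually_le_response_of_lt i (not_le.1 hgi)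
    exact no_floor i ρ hρ hev

theorem clearingEquilibria_nonempty (S : VWAPModel n a h r M f g) :
    (clearingEquilibria n a h r f g).Nonempty := by
  rcases isEmpty_or_nonempty (Fin n) with hn | ⟨⟨i₀⟩⟩
  · exact ⟨0, isEmptyElim, isEmptyElim⟩
  by_cases hsome : ∃ T₀ ∈ Ioc 0 (∑ j, a j), T₀ ≤ ∑ i, response a h r f g i T₀
  · obtain ⟨T₀, hT₀, hle⟩ := hsome
    obtain ⟨T, hT, hfix⟩ := S.exists_sum_response_eq hT₀ hle
    exact ⟨_, S.response_mem_clearingEquilibria hT hfix⟩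
  · push Not at hsome
    exact ⟨0, S.zero_mem_of_sum_response_lt i₀ hsome⟩

end VWAPModel

theorem vwap_greatest_and_least_clearing_prices_general
    (n : ℕ) (a h : Fin n → ℝ) (r M : ℝ) (f g : ℝ → ℝ)
    (ha : ∀ i, 0 < a i) (hh : ∀ i, 0 < h i) (hr : 0 ≤ r)
    (hM : ∑ i, a i ≤ M)
    (hf : Assumption2 M f)
    (hg_mem : ∀ x ∈ Set.Icc (0 : ℝ) M, g x ∈ Set.Ioc (0 : ℝ) 1)
    (hg_cont : ContinuousOn g (Set.Icc 0 M))
    (hg_anti : StrictAntiOn g (Set.Icc 0 M))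
    (hg_lt : ∀ s, memD n a s → ∀ i, g (∑ j, s j) < vwap n f i s) :
    ∃ (qup : ℝ) (qbup : Fin n → ℝ) (qdn : ℝ) (qbdn : Fin n → ℝ),
      ClearingVWAP n a h r f g qup qbup ∧
      ClearingVWAP n a h r f g qdn qbdn ∧
      ∀ q qb, ClearingVWAP n a h r f g q qb →
        (qdn ≤ q ∧ q ≤ qup) ∧ ∀ i, qbdn i ≤ qb i ∧ qb i ≤ qbup i := by
  have S : VWAPModel n a h r M f g :=
    ⟨ha, hh, hr, hM, hf, fun x hx => (hg_mem x hx).1, hg_cont, hg_lt⟩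
  have htotal : ContinuousOn (fun s : Fin n → ℝ => ∑ i, s i) (clearingEquilibria n a h r f g) :=
    (continuous_finsetSum _ fun i _ => continuous_apply i).continuousOn
  obtain ⟨smin, hsmin, hmin⟩ :=
    S.isCompact_clearingEquilibria.exists_isMinOn S.clearingEquilibria_nonempty htotal
  obtain ⟨smax, hsmax, hmax⟩ :=
    S.isCompact_clearingEquilibria.exists_isMaxOn S.clearingEquilibria_nonempty htotal
  refine ⟨_, _, _, _, clearingVWAP_iff.2 ⟨smin, hsmin, rfl, rfl⟩,
    clearingVWAP_iff.2 ⟨smax, hsmax, rfl, rfl⟩, fun q qb hq => ?_⟩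
  obtain ⟨s, hs, rfl, rfl⟩ := clearingVWAP_iff.1 hq
  have htot : ∀ t ∈ clearingEquilibria n a h r f g, ∑ i, t i ∈ Icc 0 M :=
    fun t ht => S.Icc_subset ht.1.sum_mem_Icc
  have hg := hg_anti.antitoneOn
  have hV := avgPrice_antitoneOn S.f_antitoneOn hf.f_zero
  exact ⟨⟨hg (htot s hs) (htot smax hsmax) (hmax hs), hg (htot smin hsmin) (htot s hs) (hmin hs)⟩,
    fun _ => ⟨hV (htot s hs) (htot smax hsmax) (hmax hs),
      hV (htot smin hsmin) (htot s hs) (hmin hs)⟩⟩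

/-- under VWAP pricing, Assumption 2 and Assumptions 1(3)-1(4) on `g`, the
set of clearing price vectors has a greatest and a least element. -/
theorem vwap_greatest_and_least_clearing_prices
    (n : ℕ) (a h : Fin n → ℝ) (r M : ℝ) (f g : ℝ → ℝ)
    (ha : ∀ i, 0 < a i) (hh : ∀ i, 0 < h i) (hr : 0 ≤ r)
    (hM : ∑ i, a i ≤ M)
    (hf : Assumption2 M f)
    (hg_mem : ∀ x ∈ Set.Icc (0 : ℝ) M, g x ∈ Set.Ioc (0 : ℝ) 1)
    (hg_cont : ContinuousOn g (Set.Icc 0 M))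
    (hg_convex : ConvexOn ℝ (Set.Icc 0 M) g)
    (hg_anti : StrictAntiOn g (Set.Icc 0 M))
    (hg_lt : ∀ s, memD n a s → ∀ i, g (∑ j, s j) < vwap n f i s)
    (hg_total_mono : ∀ i s, memD n a s →
      StrictMonoOn
        (fun x => x * vwap n f i (Function.update s i x)
          + (a i - x) * g (∑ j, Function.update s i x j)) (Set.Icc 0 (a i))) :
    ∃ (qup : ℝ) (qbup : Fin n → ℝ) (qdn : ℝ) (qbdn : Fin n → ℝ),
      ClearingVWAP n a h r f g qup qbup ∧
      ClearingVWAP n a h r f g qdn qbdn ∧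
      ∀ q qb, ClearingVWAP n a h r f g q qb →
        (qdn ≤ q ∧ q ≤ qup) ∧ ∀ i, qbdn i ≤ qb i ∧ qb i ≤ qbup i :=
  vwap_greatest_and_least_clearing_prices_general n a h r M f g ha hh hr hM hf hg_mem hg_cont
    hg_anti hg_lt
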